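/- arXiv:1006.2853 — 4 statements merged into one kernel-verified Lean document; each statement's English description precedes it below -/
import Mathlib

section
/- If C = Nb(S_p ∥₀ S_q) where S_p ∥₀ S_q is the exact (0-approximate) composition of deterministic metric systems S_p and S_q with identical output computed via identity on states, then S_p ∥₀ C ≼₀ S_q (the controlled plant is exactly simulated by the specification). -/
structure Sys (X U Y : Type*) where
  states : Set X
  init : Set X
  inputs : Set U
  tr : Set (X × U × X)
  H : X → Y

def IsApproxSim {X1 U1 X2 U2 Y : Type*} [PseudoMetricSpace Y]
    (S1 : Sys X1 U1 Y) (S2 : Sys X2 U2 Y) (ε : ℝ) (R : X1 → X2 → Prop) : Prop :=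
  (∀ x1 ∈ S1.init, ∃ x2 ∈ S2.init, R x1 x2) ∧
  (∀ x1 x2, R x1 x2 → dist (S1.H x1) (S2.H x2) ≤ ε) ∧
  (∀ x1 x2, R x1 x2 → ∀ u1 x1', (x1, u1, x1') ∈ S1.tr →
    ∃ u2 x2', (x2, u2, x2') ∈ S2.tr ∧ R x1' x2')

def ApproxSimBy {X1 U1 X2 U2 Y : Type*} [PseudoMetricSpace Y]
    (S1 : Sys X1 U1 Y) (S2 : Sys X2 U2 Y) (ε : ℝ) : Prop :=
  ∃ R, IsApproxSim S1 S2 ε R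

def IsApproxBisim {X1 U1 X2 U2 Y : Type*} [PseudoMetricSpace Y]
    (S1 : Sys X1 U1 Y) (S2 : Sys X2 U2 Y) (ε : ℝ) (R : X1 → X2 → Prop) : Prop :=
  IsApproxSim S1 S2 ε R ∧ IsApproxSim S2 S1 ε (fun x2 x1 => R x1 x2)

def ApproxBisimBy {X1 U1 X2 U2 Y : Type*} [PseudoMetricSpace Y]
    (S1 : Sys X1 U1 Y) (S2 : Sys X2 U2 Y) (ε : ℝ) : Prop :=
  ∃ R, IsApproxBisim S1 S2 ε R

def Subsys {X U Y : Type*} (S1 S2 : Sys X U Y) : Prop :=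
  S1.states ⊆ S2.states ∧ S1.init ⊆ S2.init ∧ S1.inputs ⊆ S2.inputs ∧
  S1.tr ⊆ S2.tr ∧ ∀ x ∈ S1.states, S1.H x = S2.H x

def Nonblocking {X U Y : Type*} (S : Sys X U Y) : Prop :=
  ∀ x ∈ S.states, ∃ u x', u ∈ S.inputs ∧ x' ∈ S.states ∧ (x, u, x') ∈ S.tr

def WF {X U Y : Type*} (S : Sys X U Y) : Prop :=
  S.init ⊆ S.states ∧ ∀ t ∈ S.tr, t.1 ∈ S.states ∧ t.2.1 ∈ S.inputs ∧ t.2.2 ∈ S.states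

def IsNb {X U Y : Type*} (S N : Sys X U Y) : Prop :=
  WF N ∧ Nonblocking N ∧ Subsys N S ∧
  ∀ S', WF S' → Nonblocking S' → Subsys S' S → Subsys S' N

def Deterministic {X U Y : Type*} (S : Sys X U Y) : Prop :=
  ∀ x u y1 y2, (x, u, y1) ∈ S.tr → (x, u, y2) ∈ S.tr → y1 = y2

def compStates {X1 U1 X2 U2 Y : Type*} [PseudoMetricSpace Y]
    (S1 : Sys X1 U1 Y) (S2 : Sys X2 U2 Y) (ε : ℝ) : Set (X1 × X2) :=
  {p | p.1 ∈ S1.states ∧ p.2 ∈ S2.states ∧ dist (S1.H p.1) (S2.H p.2) ≤ ε}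

def comp {X1 U1 X2 U2 Y : Type*} [PseudoMetricSpace Y]
    (S1 : Sys X1 U1 Y) (S2 : Sys X2 U2 Y) (ε : ℝ) : Sys (X1 × X2) (U1 × U2) Y where
  states := compStates S1 S2 ε
  init := compStates S1 S2 ε ∩ (S1.init ×ˢ S2.init)
  inputs := S1.inputs ×ˢ S2.inputs
  tr := {t | t.1 ∈ compStates S1 S2 ε ∧ t.2.2 ∈ compStates S1 S2 ε ∧
         t.2.1.1 ∈ S1.inputs ∧ t.2.1.2 ∈ S2.inputs ∧
         (t.1.1, t.2.1.1, t.2.2.1) ∈ S1.tr ∧ (t.1.2, t.2.1.2, t.2.2.2) ∈ S2.tr}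
  H := fun p => S1.H p.1

/-! `S_p ∥₀ C` is 0-simulated by its second factor `C`; `C`, a well-formed subsystem of
`S_p ∥₀ S_q`, is 0-simulated by it; and `S_p ∥₀ S_q` is 0-simulated by `S_q`. Approximate
simulations compose, with the precisions adding up by the triangle inequality. -/

section

variable {X1 U1 X2 U2 X3 U3 Y : Type*} [PseudoMetricSpace Y]

theorem IsApproxSim.trans {S1 : Sys X1 U1 Y} {S2 : Sys X2 U2 Y} {S3 : Sys X3 U3 Y}
    {ε δ : ℝ} {R : X1 → X2 → Prop} {R' : X2 → X3 → Prop}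
    (h : IsApproxSim S1 S2 ε R) (h' : IsApproxSim S2 S3 δ R') :
    IsApproxSim S1 S3 (ε + δ) (Relation.Comp R R') := by
  obtain ⟨hinit, hout, hstep⟩ := h
  obtain ⟨hinit', hout', hstep'⟩ := h'
  refine ⟨?_, ?_, ?_⟩
  · intro x1 hx1
    obtain ⟨x2, hx2, hR⟩ := hinit x1 hx1
    obtain ⟨x3, hx3, hR'⟩ := hinit' x2 hx2
    exact ⟨x3, hx3, x2, hR, hR'⟩
  · rintro x1 x3 ⟨x2, hR, hR'⟩
    calc dist (S1.H x1) (S3.H x3)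
        ≤ dist (S1.H x1) (S2.H x2) + dist (S2.H x2) (S3.H x3) := dist_triangle _ _ _
      _ ≤ ε + δ := add_le_add (hout x1 x2 hR) (hout' x2 x3 hR')
  · rintro x1 x3 ⟨x2, hR, hR'⟩ u1 x1' htr
    obtain ⟨u2, x2', htr2, hR2⟩ := hstep x1 x2 hR u1 x1' htr
    obtain ⟨u3, x3', htr3, hR3⟩ := hstep' x2 x3 hR' u2 x2' htr2
    exact ⟨u3, x3', htr3, x2', hR2, hR3⟩

theorem ApproxSimBy.trans {S1 : Sys X1 U1 Y} {S2 : Sys X2 U2 Y} {S3 : Sys X3 U3 Y}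
    {ε δ : ℝ} (h : ApproxSimBy S1 S2 ε) (h' : ApproxSimBy S2 S3 δ) :
    ApproxSimBy S1 S3 (ε + δ) :=
  let ⟨_, hR⟩ := h
  let ⟨_, hR'⟩ := h'
  ⟨_, hR.trans hR'⟩

theorem isApproxSim_comp_right (S1 : Sys X1 U1 Y) (S2 : Sys X2 U2 Y) (ε : ℝ) :
    IsApproxSim (comp S1 S2 ε) S2 ε (fun p x2 => p ∈ compStates S1 S2 ε ∧ p.2 = x2) := by
  refine ⟨?_, ?_, ?_⟩
  · rintro p ⟨hp, -, hp2⟩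
    exact ⟨p.2, hp2, hp, rfl⟩
  · rintro p _ ⟨hp, rfl⟩
    exact hp.2.2
  · rintro p _ ⟨-, rfl⟩ u p' ⟨-, hp', -, -, -, htr2⟩
    exact ⟨u.2, p'.2, htr2, hp', rfl⟩

theorem approxSimBy_comp_right (S1 : Sys X1 U1 Y) (S2 : Sys X2 U2 Y) (ε : ℝ) :
    ApproxSimBy (comp S1 S2 ε) S2 ε :=
  ⟨_, isApproxSim_comp_right S1 S2 ε⟩

theorem Subsys.isApproxSim {N S : Sys X1 U1 Y} (h : Subsys N S) (hN : WF N) :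
    IsApproxSim N S 0 (fun x y => x ∈ N.states ∧ x = y) := by
  obtain ⟨-, hinit, -, htr, hH⟩ := h
  refine ⟨?_, ?_, ?_⟩
  · intro x hx
    exact ⟨x, hinit hx, hN.1 hx, rfl⟩
  · rintro x _ ⟨hx, rfl⟩
    rw [hH x hx, dist_self]
  · rintro x _ ⟨-, rfl⟩ u x' hxx'
    exact ⟨u, x', htr hxx', (hN.2 _ hxx').2.2, rfl⟩

theorem Subsys.approxSimBy {N S : Sys X1 U1 Y} (h : Subsys N S) (hN : WF N) :
    ApproxSimBy N S 0 :=
  ⟨_, h.isApproxSim hN⟩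

end

theorem controlled_plant_sim_spec_general {Xs Up Uq : Type*} [MetricSpace Xs]
    (Sp : Sys Xs Up Xs) (Sq : Sys Xs Uq Xs)
    (C : Sys (Xs × Xs) (Up × Uq) Xs) (hC : IsNb (comp Sp Sq 0) C) :
    ApproxSimBy (comp Sp C 0) Sq 0 := by
  obtain ⟨hWF, -, hSub, -⟩ := hC
  have hchain := (approxSimBy_comp_right Sp C 0).trans
    ((hSub.approxSimBy hWF).trans (approxSimBy_comp_right Sp Sq 0))
  simpa only [add_zero] using hchain

/-- If `C = Nb(S_p ∥₀ S_q)` for deterministic metric systems `S_p`, `S_q` whose outputs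
are the identity on a common state set, then `S_p ∥₀ C ≼₀ S_q`. -/
theorem controlled_plant_sim_spec {Xs Up Uq : Type*} [MetricSpace Xs]
    (Sp : Sys Xs Up Xs) (Sq : Sys Xs Uq Xs)
    (hHp : Sp.H = id) (hHq : Sq.H = id)
    (hdp : Deterministic Sp) (hdq : Deterministic Sq)
    (C : Sys (Xs × Xs) (Up × Uq) Xs) (hC : IsNb (comp Sp Sq 0) C) :
    ApproxSimBy (comp Sp C 0) Sq 0 :=
  controlled_plant_sim_spec_general Sp Sq C hC
end

section
/- Non-blockingness of the closed loop: if C is a non-blocking sub-system of S_p ∥₀ S_q (where S_p is deterministic with output map the identity on states), then the composition S_p ∥₀ C is non-blocking. -/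
/-!
In a state `(p₁, (p₂, q))` of `S₁ ∥₀ C` with `C ⊑ S₁ ∥_ε S₂`, the outputs `S₁.H p₁` and
`C.H (p₂, q) = S₁.H p₂` agree, so `p₁ = p₂` once `S₁.H` is injective. A transition of `C` from
`(p₂, q)` contains an `S₁`-transition from `p₂`, which the first component copies; the pair stays
on the diagonal, where the outputs agree again.
-/

section
variable {X₁ U₁ X₂ U₂ Y : Type*}
variable {S₁ : Sys X₁ U₁ Y} {S₂ : Sys X₂ U₂ Y} {ε : ℝ} {C : Sys (X₁ × X₂) (U₁ × U₂) Y}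

theorem mem_compStates_zero_iff [MetricSpace Y] {p : X₁ × X₂} :
    p ∈ compStates S₁ S₂ 0 ↔ p.1 ∈ S₁.states ∧ p.2 ∈ S₂.states ∧ S₁.H p.1 = S₂.H p.2 := by
  simp only [compStates, Set.mem_ofPred_eq, dist_le_zero]

theorem Subsys.H_eq_fst_of_comp [PseudoMetricSpace Y] (h : Subsys C (comp S₁ S₂ ε))
    {x : X₁ × X₂} (hx : x ∈ C.states) : C.H x = S₁.H x.1 :=
  h.2.2.2.2 x hx

theorem Subsys.fst_tr_of_comp [PseudoMetricSpace Y] (h : Subsys C (comp S₁ S₂ ε))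
    {x x' : X₁ × X₂} {u : U₁ × U₂} (hu : (x, u, x') ∈ C.tr) :
    u.1 ∈ S₁.inputs ∧ x'.1 ∈ S₁.states ∧ (x.1, u.1, x'.1) ∈ S₁.tr := by
  obtain ⟨-, ⟨hx', -⟩, hu₁, -, htr, -⟩ := h.2.2.2.1 hu
  exact ⟨hu₁, hx', htr⟩

theorem Subsys.diag_mem_compStates [PseudoMetricSpace Y] (h : Subsys C (comp S₁ S₂ ε))
    {x : X₁ × X₂} (hx : x ∈ C.states) (hx₁ : x.1 ∈ S₁.states) : (x.1, x) ∈ compStates S₁ C 0 :=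
  ⟨hx₁, hx, by rw [h.H_eq_fst_of_comp hx, dist_self]⟩

theorem Nonblocking.comp_of_subsys_comp [MetricSpace Y] (hH : Function.Injective S₁.H)
    (hsub : Subsys C (comp S₁ S₂ ε)) (hnb : Nonblocking C) : Nonblocking (comp S₁ C 0) := by
  rintro ⟨p, x⟩ hpx
  obtain ⟨-, hx, hHpx⟩ := mem_compStates_zero_iff.mp hpx
  have hpx₁ : p = x.1 := hH (hHpx.trans (hsub.H_eq_fst_of_comp hx))
  subst hpx₁
  obtain ⟨u, x', huC, hx'C, htrC⟩ := hnb x hx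
  obtain ⟨hu₁, hx'₁, htr₁⟩ := hsub.fst_tr_of_comp htrC
  have hx'diag := hsub.diag_mem_compStates hx'C hx'₁
  exact ⟨(u.1, u), (x'.1, x'), ⟨hu₁, huC⟩, hx'diag, hpx, hx'diag, hu₁, huC, htr₁, htrC⟩

end

theorem closed_loop_nonblocking_general {Xs Up Uq : Type*} [MetricSpace Xs]
    (Sp : Sys Xs Up Xs) (Sq : Sys Xs Uq Xs)
    (hHp : Sp.H = id)
    (C : Sys (Xs × Xs) (Up × Uq) Xs)
    (hsub : Subsys C (comp Sp Sq 0)) (hnb : Nonblocking C) :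
    Nonblocking (comp Sp C 0) :=
  hnb.comp_of_subsys_comp (hHp ▸ Function.injective_id) hsub

/-- Non-blockingness of the closed loop: if `C` is a non-blocking sub-system of
`S_p ∥₀ S_q` (with `S_p` deterministic and output the identity on states), then
`S_p ∥₀ C` is non-blocking. -/
theorem closed_loop_nonblocking {Xs Up Uq : Type*} [MetricSpace Xs]
    (Sp : Sys Xs Up Xs) (Sq : Sys Xs Uq Xs)
    (hHp : Sp.H = id) (hdp : Deterministic Sp)
    (C : Sys (Xs × Xs) (Up × Uq) Xs)
    (hsub : Subsys C (comp Sp Sq 0)) (hnb : Nonblocking C) :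
    Nonblocking (comp Sp C 0) :=
  closed_loop_nonblocking_general Sp Sq hHp C hsub hnb
end

section
/- Non-blockingness of the approximate closed loop: if S_τ(P) and S_p are θ-approximately bisimilar and C is a non-blocking sub-system of S_p ∥₀ S_q, then S_τ(P) ∥_θ C is non-blocking. -/
theorem Subsys.comp_H_eq {X1 U1 X2 U2 Y : Type*} [PseudoMetricSpace Y]
    {S1 : Sys X1 U1 Y} {S2 : Sys X2 U2 Y} {ε : ℝ} {C : Sys (X1 × X2) (U1 × U2) Y}
    (hsub : Subsys C (comp S1 S2 ε)) {x : X1 × X2} (hx : x ∈ C.states) :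
    C.H x = S1.H x.1 :=
  hsub.2.2.2.2 x hx

theorem Subsys.comp_fst_mem_tr {X1 U1 X2 U2 Y : Type*} [PseudoMetricSpace Y]
    {S1 : Sys X1 U1 Y} {S2 : Sys X2 U2 Y} {ε : ℝ} {C : Sys (X1 × X2) (U1 × U2) Y}
    (hsub : Subsys C (comp S1 S2 ε)) {x x' : X1 × X2} {u : U1 × U2}
    (htr : (x, u, x') ∈ C.tr) : (x.1, u.1, x'.1) ∈ S1.tr :=
  (hsub.2.2.2.1 htr).2.2.2.2.1

theorem comp_nonblocking_of_forall_exists_tr {X1 U1 X2 U2 Y : Type*} [PseudoMetricSpace Y]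
    {S1 : Sys X1 U1 Y} {S2 : Sys X2 U2 Y} {ε : ℝ} (hwf : WF S1) (hnb : Nonblocking S2)
    (hmatch : ∀ x1 x2 u2 x2', (x1, x2) ∈ compStates S1 S2 ε → x2' ∈ S2.states →
      (x2, u2, x2') ∈ S2.tr → ∃ u1 x1', (x1, u1, x1') ∈ S1.tr ∧ dist (S1.H x1') (S2.H x2') ≤ ε) :
    Nonblocking (comp S1 S2 ε) := by
  rintro ⟨x1, x2⟩ hx
  obtain ⟨u2, x2', hu2, hx2', htr2⟩ := hnb x2 hx.2.1
  obtain ⟨u1, x1', htr1, hclose⟩ := hmatch x1 x2 u2 x2' hx hx2' htr2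
  obtain ⟨-, hu1, hx1'⟩ := hwf.2 _ htr1
  have hx' : (x1', x2') ∈ compStates S1 S2 ε := ⟨hx1', hx2', hclose⟩
  exact ⟨(u1, u2), (x1', x2'), ⟨hu1, hu2⟩, hx', hx, hx', hu1, hu2, htr1, htr2⟩

theorem approx_closed_loop_nonblocking_general {X1 U1 X2 U2 X3 U3 Y : Type*} [PseudoMetricSpace Y]
    (P : Sys X1 U1 Y) (Sp : Sys X2 U2 Y) (Sq : Sys X3 U3 Y)
    (θ : ℝ) (hwfP : WF P)
    (hbisim : IsApproxBisim P Sp θ (fun x y => dist (P.H x) (Sp.H y) ≤ θ))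
    (C : Sys (X2 × X3) (U2 × U3) Y)
    (hsub : Subsys C (comp Sp Sq 0)) (hnb : Nonblocking C) :
    Nonblocking (comp P C θ) := by
  refine comp_nonblocking_of_forall_exists_tr hwfP hnb ?_
  rintro x1 x2 u x2' ⟨-, hx2, hclose⟩ hx2' htr
  rw [hsub.comp_H_eq hx2] at hclose
  -- the `Sp`-to-`P` half of the bisimulation lifts `C`'s move to `P`
  obtain ⟨u1, x1', htrP, hclose'⟩ :=
    hbisim.2.2.2 x2.1 x1 hclose u.1 x2'.1 (hsub.comp_fst_mem_tr htr)
  exact ⟨u1, x1', htrP, by rwa [hsub.comp_H_eq hx2']⟩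

/-- Non-blockingness of the approximate closed loop: if `S_τ(P)` and `S_p` are
θ-approximately bisimilar (via the θ-closeness relation) and `C` is a non-blocking
sub-system of `S_p ∥₀ S_q`, then `S_τ(P) ∥_θ C` is non-blocking. -/
theorem approx_closed_loop_nonblocking {X1 U1 X2 U2 X3 U3 Y : Type*} [PseudoMetricSpace Y]
    (P : Sys X1 U1 Y) (Sp : Sys X2 U2 Y) (Sq : Sys X3 U3 Y)
    (θ : ℝ) (hθ : 0 ≤ θ) (hwfP : WF P)
    (hbisim : IsApproxBisim P Sp θ (fun x y => dist (P.H x) (Sp.H y) ≤ θ))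
    (C : Sys (X2 × X3) (U2 × U3) Y)
    (hsub : Subsys C (comp Sp Sq 0)) (hnb : Nonblocking C) :
    Nonblocking (comp P C θ) :=
  approx_closed_loop_nonblocking_general P Sp Sq θ hwfP hbisim C hsub hnb
end

section
/- Correct-by-design main theorem (abstract form): let S_τ(P) ≅_{θ_p} S_p and S_q ≼_{θ_q} S_τ(Q) be metric systems with common output set, and suppose θ_p + θ_q ≤ ε. Then S_τ(P) ∥_{θ_p} Nb(S_p ∥₀ S_q) ≼_ε S_τ(Q). -/
/-! The composed closed loop is simulated, with precision `θp`, by its controller component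
`N` (the composition only keeps pairs whose outputs are `θp`-close); `N` is a sub-system of
`S_p ∥₀ S_q`, which in turn is exactly simulated by its component `S_q`; and `S_q ≼_{θq} Q`.
Approximate simulations compose with additive precision, so the chain yields
`≼_{θp + θq}`, hence `≼_ε`. -/

namespace ApproxSimBy

variable {X1 U1 X2 U2 X3 U3 Y : Type*} [PseudoMetricSpace Y]

theorem mono {S1 : Sys X1 U1 Y} {S2 : Sys X2 U2 Y} {ε ε' : ℝ}
    (h : ApproxSimBy S1 S2 ε) (hεε' : ε ≤ ε') : ApproxSimBy S1 S2 ε' := by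
  obtain ⟨R, hInit, hOut, hTr⟩ := h
  exact ⟨R, hInit, fun x1 x2 hR => (hOut x1 x2 hR).trans hεε', hTr⟩

theorem trans_s15 {S1 : Sys X1 U1 Y} {S2 : Sys X2 U2 Y} {S3 : Sys X3 U3 Y} {ε ε' : ℝ}
    (h12 : ApproxSimBy S1 S2 ε) (h23 : ApproxSimBy S2 S3 ε') :
    ApproxSimBy S1 S3 (ε + ε') := by
  obtain ⟨R, hInit, hOut, hTr⟩ := h12
  obtain ⟨R', hInit', hOut', hTr'⟩ := h23
  refine ⟨fun x1 x3 => ∃ x2, R x1 x2 ∧ R' x2 x3, ?_, ?_, ?_⟩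
  · intro x1 hx1
    obtain ⟨x2, hx2, hR⟩ := hInit x1 hx1
    obtain ⟨x3, hx3, hR'⟩ := hInit' x2 hx2
    exact ⟨x3, hx3, x2, hR, hR'⟩
  · rintro x1 x3 ⟨x2, hR, hR'⟩
    calc dist (S1.H x1) (S3.H x3)
        ≤ dist (S1.H x1) (S2.H x2) + dist (S2.H x2) (S3.H x3) := dist_triangle _ _ _
      _ ≤ ε + ε' := add_le_add (hOut x1 x2 hR) (hOut' x2 x3 hR')
  · rintro x1 x3 ⟨x2, hR, hR'⟩ u1 x1' htr1
    obtain ⟨u2, x2', htr2, hR₁⟩ := hTr x1 x2 hR u1 x1' htr1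
    obtain ⟨u3, x3', htr3, hR₂⟩ := hTr' x2 x3 hR' u2 x2' htr2
    exact ⟨u3, x3', htr3, x2', hR₁, hR₂⟩

end ApproxSimBy

theorem comp_approxSimBy_right {X1 U1 X2 U2 Y : Type*} [PseudoMetricSpace Y]
    (S1 : Sys X1 U1 Y) (S2 : Sys X2 U2 Y) (ε : ℝ) :
    ApproxSimBy (comp S1 S2 ε) S2 ε := by
  refine ⟨fun p x2 => p ∈ (comp S1 S2 ε).states ∧ p.2 = x2, ?_, ?_, ?_⟩
  · rintro p ⟨hp, -, hinit2⟩
    exact ⟨p.2, hinit2, hp, rfl⟩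
  · rintro p x2 ⟨⟨-, -, hdist⟩, rfl⟩
    exact hdist
  · rintro p x2 ⟨-, rfl⟩ u p' ⟨-, hp', -, -, -, htr2⟩
    exact ⟨u.2, p'.2, htr2, hp', rfl⟩

theorem Subsys.approxSimBy_zero {X U Y : Type*} [PseudoMetricSpace Y] {S1 S2 : Sys X U Y}
    (hWF : WF S1) (hsub : Subsys S1 S2) : ApproxSimBy S1 S2 0 := by
  obtain ⟨-, hinit, -, htr, hH⟩ := hsub
  refine ⟨fun x1 x2 => x1 ∈ S1.states ∧ x1 = x2, ?_, ?_, ?_⟩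
  · exact fun x hx => ⟨x, hinit hx, hWF.1 hx, rfl⟩
  · rintro x _ ⟨hx, rfl⟩
    simp [hH x hx]
  · rintro x _ ⟨-, rfl⟩ u x' hx'
    exact ⟨u, x', htr hx', (hWF.2 _ hx').2.2, rfl⟩

theorem IsNb.approxSimBy_zero {X U Y : Type*} [PseudoMetricSpace Y] {S N : Sys X U Y}
    (hN : IsNb S N) : ApproxSimBy N S 0 :=
  Subsys.approxSimBy_zero hN.1 hN.2.2.1

theorem correct_by_design_general {X1 U1 X2 U2 X3 U3 X4 U4 Y : Type*} [PseudoMetricSpace Y]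
    (P : Sys X1 U1 Y) (Sp : Sys X2 U2 Y) (Sq : Sys X3 U3 Y) (Q : Sys X4 U4 Y)
    (θp θq ε : ℝ) (hε : θp + θq ≤ ε)
    (hq : ApproxSimBy Sq Q θq)
    (N : Sys (X2 × X3) (U2 × U3) Y) (hN : IsNb (comp Sp Sq 0) N) :
    ApproxSimBy (comp P N θp) Q ε := by
  have hNq : ApproxSimBy N Sq 0 := by
    simpa using hN.approxSimBy_zero.trans_s15 (comp_approxSimBy_right Sp Sq 0)
  exact ((comp_approxSimBy_right P N θp).trans_s15 (hNq.trans_s15 hq)).mono (by simpa using hε)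

/-- Correct-by-design main theorem (abstract form): if `S_τ(P) ≅_{θ_p} S_p`,
`S_q ≼_{θ_q} S_τ(Q)` and `θ_p + θ_q ≤ ε`, then
`S_τ(P) ∥_{θ_p} Nb(S_p ∥₀ S_q) ≼_ε S_τ(Q)`. -/
theorem correct_by_design {X1 U1 X2 U2 X3 U3 X4 U4 Y : Type*} [PseudoMetricSpace Y]
    (P : Sys X1 U1 Y) (Sp : Sys X2 U2 Y) (Sq : Sys X3 U3 Y) (Q : Sys X4 U4 Y)
    (θp θq ε : ℝ) (hθp : 0 ≤ θp) (hθq : 0 ≤ θq) (hε : θp + θq ≤ ε)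
    (hbisim : ApproxBisimBy P Sp θp)
    (hq : ApproxSimBy Sq Q θq)
    (N : Sys (X2 × X3) (U2 × U3) Y) (hN : IsNb (comp Sp Sq 0) N) :
    ApproxSimBy (comp P N θp) Q ε :=
  correct_by_design_general P Sp Sq Q θp θq ε hε hq N hN
end
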